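/- arXiv:math/0601253 — 2 statements merged into one kernel-verified Lean document; each statement's English description precedes it below -/
import Mathlib

section
/- Let y > 0 and let w be a real number with 2π|w| < y. Then Re g(y + 2πiw) − g(y) = Σ_{k=1}^∞ (−1)^{k+1} ((2πw)^{2k} / (2k)!) · f^{(2k+1)}(y), where f(y) = 1/(e^y − 1) and f^{(2k+1)} denotes its (2k+1)-st derivative; the series on the right converges absolutely. -/
open Real Complex Filter

/-- `g(v) = Σ_{j≥1} j e^{-jv}` for complex `v`. -/
noncomputable def gFun (v : ℂ) : ℂ := ∑' j : ℕ, ((j : ℂ) + 1) * Complex.exp (-((j : ℂ) + 1) * v)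

/-- `f(y) = 1/(e^y - 1)`. -/
noncomputable def fFun (y : ℝ) : ℝ := 1 / (Real.exp y - 1)

lemma summable_aux (n : ℕ) {a : ℝ} (ha : 0 < a) :
    Summable fun j : ℕ => ((j : ℝ) + 1) ^ n * Real.exp (-((j : ℝ) + 1) * a) := by
  have hr : ‖Real.exp (-a)‖ < 1 := by
    rw [Real.norm_eq_abs, abs_of_pos (Real.exp_pos _)]
    exact Real.exp_lt_one_iff.2 (neg_neg_iff_pos.2 ha)
  have h := summable_pow_mul_geometric_of_norm_lt_one (R := ℝ) n hr
  have h2 : Summable fun j : ℕ => ((j + 1 : ℕ) : ℝ) ^ n * Real.exp (-a) ^ (j + 1) :=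
    (summable_nat_add_iff 1).2 h
  refine h2.congr fun j => ?_
  rw [← Real.exp_nat_mul]
  push_cast
  ring_nf

lemma fFun_eq_tsum {x : ℝ} (hx : 0 < x) :
    fFun x = ∑' j : ℕ, Real.exp (-((j : ℝ) + 1) * x) := by
  have hr1 : Real.exp (-x) < 1 := Real.exp_lt_one_iff.2 (neg_neg_iff_pos.2 hx)
  have hr0 : 0 ≤ Real.exp (-x) := (Real.exp_pos _).le
  have h1 : ∀ j : ℕ, Real.exp (-((j : ℝ) + 1) * x) = Real.exp (-x) * Real.exp (-x) ^ j := by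
    intro j
    rw [← Real.exp_nat_mul, ← Real.exp_add]
    ring_nf
  rw [tsum_congr h1, tsum_mul_left, tsum_geometric_of_lt_one hr0 hr1]
  have hx1 : 0 < Real.exp x - 1 := by
    have := Real.one_lt_exp_iff.2 hx; linarith
  have hx2 : 0 < 1 - Real.exp (-x) := by linarith
  rw [fFun, Real.exp_neg]
  have h3 : Real.exp x ≠ 0 := (Real.exp_pos x).ne'
  field_simp

lemma hasDerivAt_term (n : ℕ) (c : ℝ) (x : ℝ) :
    HasDerivAt (fun z => (-c) ^ n * Real.exp (-c * z)) ((-c) ^ (n + 1) * Real.exp (-c * x)) x := by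
  have h1 : HasDerivAt (fun z : ℝ => -c * z) (-c) x := by
    simpa using (hasDerivAt_id x).const_mul (-c)
  have h2 := (Real.hasDerivAt_exp (-c * x)).comp x h1
  have h3 := h2.const_mul ((-c) ^ n)
  exact h3.congr_deriv (by rw [pow_succ]; ring)

lemma iteratedDeriv_fFun (n : ℕ) : ∀ x : ℝ, 0 < x →
    iteratedDeriv n fFun x = ∑' j : ℕ, (-((j : ℝ) + 1)) ^ n * Real.exp (-((j : ℝ) + 1) * x) := by
  induction n with
  | zero =>
    intro x hx
    simpa [iteratedDeriv_zero] using fFun_eq_tsum hx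
  | succ n ih =>
    intro x hx
    rw [iteratedDeriv_succ]
    have hev : iteratedDeriv n fFun =ᶠ[nhds x]
        (fun z => ∑' j : ℕ, (-((j : ℝ) + 1)) ^ n * Real.exp (-((j : ℝ) + 1) * z)) := by
      filter_upwards [IsOpen.mem_nhds isOpen_Ioi hx] with z hz using ih z hz
    rw [hev.deriv_eq]
    have key : HasDerivAt
        (fun z => ∑' j : ℕ, (-((j : ℝ) + 1)) ^ n * Real.exp (-((j : ℝ) + 1) * z))
        (∑' j : ℕ, (-((j : ℝ) + 1)) ^ (n + 1) * Real.exp (-((j : ℝ) + 1) * x)) x := by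
      refine hasDerivAt_tsum_of_isPreconnected
        (u := fun j : ℕ => ((j : ℝ) + 1) ^ (n + 1) * Real.exp (-((j : ℝ) + 1) * (x / 2)))
        (summable_aux _ (half_pos hx)) isOpen_Ioi (isPreconnected_Ioi)
        (fun j z _ => hasDerivAt_term n ((j : ℝ) + 1) z)
        (fun j z hz => ?_) (Set.mem_Ioi.2 (half_lt_self hx)) ?_ (Set.mem_Ioi.2 (half_lt_self hx))
      · have hc : (0 : ℝ) < (j : ℝ) + 1 := by positivity
        rw [Real.norm_eq_abs, abs_mul, _root_.abs_pow, abs_neg, abs_of_pos hc,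
          abs_of_pos (Real.exp_pos _)]
        refine mul_le_mul_of_nonneg_left ?_ (by positivity)
        exact Real.exp_le_exp.2 (by nlinarith [Set.mem_Ioi.1 hz])
      · refine ((summable_aux n hx).mul_left ((-1 : ℝ) ^ n)).congr fun j => ?_
        rw [show (-((j:ℝ)+1)) = (-1) * ((j:ℝ)+1) by ring, mul_pow]
        ring
    rw [key.deriv]

lemma gterm_norm (j : ℕ) (v : ℂ) :
    ‖((j : ℂ) + 1) * Complex.exp (-((j : ℂ) + 1) * v)‖ =
      ((j : ℝ) + 1) * Real.exp (-((j : ℝ) + 1) * v.re) := by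
  rw [norm_mul, Complex.norm_exp]
  congr 1
  · have : ((j : ℂ) + 1) = ((j + 1 : ℕ) : ℂ) := by push_cast; ring
    rw [this, Complex.norm_natCast]; push_cast; ring
  · congr 1
    simp [Complex.mul_re]

lemma gFun_summable (v : ℂ) (hv : 0 < v.re) :
    Summable fun j : ℕ => ((j : ℂ) + 1) * Complex.exp (-((j : ℂ) + 1) * v) := by
  refine Summable.of_norm ?_
  simp only [gterm_norm]
  simpa using summable_aux 1 hv

lemma gFun_re (y w : ℝ) (hy : 0 < y) :
    (gFun ((y : ℂ) + 2 * π * Complex.I * w)).re =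
      ∑' j : ℕ, ((j : ℝ) + 1) * Real.exp (-((j : ℝ) + 1) * y) *
        Real.cos (((j : ℝ) + 1) * (2 * π * w)) := by
  have hv : (0:ℝ) < ((y : ℂ) + 2 * π * Complex.I * w).re := by simp [hy]
  rw [gFun, Complex.re_tsum (gFun_summable _ hv)]
  refine tsum_congr fun j => ?_
  rw [Complex.mul_re]
  have him : ((j : ℂ) + 1).im = 0 := by simp
  have hre : ((j : ℂ) + 1).re = (j : ℝ) + 1 := by simp
  rw [him, hre, Complex.exp_re]
  have h1 : (-((j : ℂ) + 1) * ((y : ℂ) + 2 * π * Complex.I * w)).re = -((j:ℝ)+1) * y := by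
    simp [Complex.mul_re]
  have h2 : (-((j : ℂ) + 1) * ((y : ℂ) + 2 * π * Complex.I * w)).im = -(((j:ℝ)+1) * (2*π*w)) := by
    simp [Complex.mul_im]; ring
  rw [h1, h2, Real.cos_neg]
  ring

lemma gFun_re_real (y : ℝ) (hy : 0 < y) :
    (gFun (y : ℂ)).re = ∑' j : ℕ, ((j : ℝ) + 1) * Real.exp (-((j : ℝ) + 1) * y) := by
  have hv : (0:ℝ) < ((y : ℂ)).re := by simpa using hy
  rw [gFun, Complex.re_tsum (gFun_summable _ hv)]
  refine tsum_congr fun j => ?_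
  rw [Complex.mul_re]
  have him : ((j : ℂ) + 1).im = 0 := by simp
  have hre : ((j : ℂ) + 1).re = (j : ℝ) + 1 := by simp
  rw [him, hre, Complex.exp_re]
  have h1 : (-((j : ℂ) + 1) * (y : ℂ)).re = -((j:ℝ)+1) * y := by
    simp [Complex.mul_re]
  have h2 : (-((j : ℂ) + 1) * (y : ℂ)).im = 0 := by
    simp [Complex.mul_im]
  rw [h1, h2, Real.cos_zero]
  ring

lemma summable_cos_slice (b : ℝ) :
    Summable fun m : ℕ => |b| ^ (2 * (m + 1)) / ((2 * (m + 1)).factorial : ℝ) := by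
  have h := (Real.summable_pow_div_factorial |b|).comp_injective
    (i := fun m : ℕ => 2 * (m + 1)) (fun a b h => by simp only [] at h; omega)
  exact h

lemma tsum_cos_slice_le (b : ℝ) :
    (∑' m : ℕ, |b| ^ (2 * (m + 1)) / ((2 * (m + 1)).factorial : ℝ)) ≤ Real.exp |b| := by
  have hexp : Real.exp |b| = ∑' n : ℕ, |b| ^ n / (n.factorial : ℝ) := by
    rw [Real.exp_eq_exp_ℝ, NormedSpace.exp_eq_tsum_div]
  rw [hexp]
  refine Summable.tsum_le_tsum_of_inj (fun m : ℕ => 2 * (m + 1)) (fun a b h => by simp only [] at h; omega)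
    (fun c _ => by positivity) (fun m => le_rfl) (summable_cos_slice b)
    (Real.summable_pow_div_factorial |b|)

lemma cos_sub_one (θ : ℝ) :
    (∑' m : ℕ, (-1 : ℝ) ^ (m + 1) * θ ^ (2 * (m + 1)) / ((2 * (m + 1)).factorial : ℝ)) =
      Real.cos θ - 1 := by
  have hs : HasSum (fun n : ℕ => (-1 : ℝ) ^ n * θ ^ (2 * n) / ((2 * n).factorial : ℝ))
      (Real.cos θ) := Real.hasSum_cos θ
  have h0 := Summable.tsum_eq_zero_add hs.summable
  rw [hs.tsum_eq] at h0
  simp only [pow_zero, mul_zero, one_mul, Nat.factorial_zero, Nat.cast_one, div_one] at h0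
  linarith

/-- For `y > 0` and real `w` with `2π|w| < y`,
`Re g(y + 2πiw) - g(y) = Σ_{k≥1} (-1)^{k+1} (2πw)^{2k}/(2k)! · f^{(2k+1)}(y)`
(the sum is indexed by `k = m + 1`, `m : ℕ`), the series converging absolutely. -/
theorem re_g_diff_series (y w : ℝ) (hy : 0 < y) (hw : 2 * π * |w| < y) :
    (gFun ((y : ℂ) + 2 * π * Complex.I * w)).re - (gFun (y : ℂ)).re =
      (∑' m : ℕ, (-1 : ℝ) ^ (m + 1 + 1) * (2 * π * w) ^ (2 * (m + 1)) /
        (Nat.factorial (2 * (m + 1))) * iteratedDeriv (2 * (m + 1) + 1) fFun y) ∧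
    Summable (fun m : ℕ => |(-1 : ℝ) ^ (m + 1 + 1) * (2 * π * w) ^ (2 * (m + 1)) /
        (Nat.factorial (2 * (m + 1))) * iteratedDeriv (2 * (m + 1) + 1) fFun y|) := by
  set X : ℝ := 2 * π * w with hXdef
  have hXabs : |X| < y := by
    have hh : |X| = 2 * π * |w| := by
      rw [hXdef, abs_mul, abs_mul, abs_of_pos (two_pos (α := ℝ)), abs_of_pos Real.pi_pos]
    rwa [hh]
  set c : ℕ → ℝ := fun j => (j : ℝ) + 1 with hc
  have hcpos : ∀ j, 0 < c j := fun j => by positivity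
  set E : ℕ → ℝ := fun j => Real.exp (-(c j) * y) with hE
  have hEpos : ∀ j, 0 < E j := fun j => Real.exp_pos _
  set T : ℕ → ℕ → ℝ := fun j m =>
    (-1 : ℝ) ^ (m + 1) * (X * c j) ^ (2 * (m + 1)) / ((2 * (m + 1)).factorial : ℝ) *
      (c j * E j) with hTdef
  have habsT : ∀ j m, |T j m| =
      |X * c j| ^ (2 * (m + 1)) / ((2 * (m + 1)).factorial : ℝ) * (c j * E j) := by
    intro j m
    rw [hTdef]
    rw [abs_mul, abs_div, abs_mul, _root_.abs_pow (-1 : ℝ), abs_neg, abs_one, one_pow, one_mul,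
      _root_.abs_pow, Nat.abs_cast, abs_of_pos (mul_pos (hcpos j) (hEpos j))]
  have hslice : ∀ j, Summable fun m => |T j m| := by
    intro j
    refine ((summable_cos_slice (X * c j)).mul_right (c j * E j)).congr fun m => ?_
    rw [habsT]
  have htsum_slice_le : ∀ j, (∑' m, |T j m|) ≤ c j * Real.exp (-(c j) * (y - |X|)) := by
    intro j
    have h1 : (∑' m, |T j m|) =
        (∑' m, |X * c j| ^ (2 * (m + 1)) / ((2 * (m + 1)).factorial : ℝ)) * (c j * E j) := by
      rw [← tsum_mul_right]
      exact tsum_congr fun m => habsT j m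
    rw [h1]
    calc (∑' m, |X * c j| ^ (2 * (m + 1)) / ((2 * (m + 1)).factorial : ℝ)) * (c j * E j)
        ≤ Real.exp |X * c j| * (c j * E j) :=
          mul_le_mul_of_nonneg_right (tsum_cos_slice_le (X * c j))
            (le_of_lt (mul_pos (hcpos j) (hEpos j)))
      _ = c j * Real.exp (-(c j) * (y - |X|)) := by
          rw [abs_mul, abs_of_pos (hcpos j), hE]
          have hrw : -(c j) * (y - |X|) = |X| * c j + (-(c j) * y) := by ring
          rw [hrw, Real.exp_add]
          ring
  have hmaj : Summable fun j => c j * Real.exp (-(c j) * (y - |X|)) := by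
    have h := summable_aux 1 (sub_pos.2 hXabs)
    refine h.congr fun j => ?_
    rw [hc]
    ring_nf
  have hTabs : Summable fun p : ℕ × ℕ => |T p.1 p.2| :=
    (summable_prod_of_nonneg (fun p => abs_nonneg _)).2
      ⟨hslice, Summable.of_nonneg_of_le (fun j => tsum_nonneg fun m => abs_nonneg _)
        htsum_slice_le hmaj⟩
  have hT : Summable (Function.uncurry T) := Summable.of_abs hTabs
  have S2 : Summable fun j => c j * E j := by
    have h := summable_aux 1 hy
    refine h.congr fun j => ?_
    rw [hE, hc]
    ring_nf
  have S1 : Summable fun j => c j * E j * Real.cos (X * c j) := by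
    refine Summable.of_abs (Summable.of_nonneg_of_le (fun j => abs_nonneg _) (fun j => ?_) S2)
    rw [abs_mul, abs_of_pos (mul_pos (hcpos j) (hEpos j))]
    exact mul_le_of_le_one_right (le_of_lt (mul_pos (hcpos j) (hEpos j)))
      (Real.abs_cos_le_one _)
  have hL : (gFun ((y : ℂ) + 2 * π * Complex.I * w)).re - (gFun (y : ℂ)).re =
      ∑' j, c j * E j * (Real.cos (X * c j) - 1) := by
    have hA : (∑' j : ℕ, ((j : ℝ) + 1) * Real.exp (-((j : ℝ) + 1) * y) *
        Real.cos (((j : ℝ) + 1) * (2 * π * w))) = ∑' j, c j * E j * Real.cos (X * c j) := by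
      refine tsum_congr fun j => ?_
      rw [hc, hE, hXdef, mul_comm ((j : ℝ) + 1) (2 * π * w)]
    have hB : (∑' j : ℕ, ((j : ℝ) + 1) * Real.exp (-((j : ℝ) + 1) * y)) =
        ∑' j, c j * E j := by
      refine tsum_congr fun j => ?_
      rw [hc, hE]
    rw [gFun_re y w hy, gFun_re_real y hy, hA, hB, ← Summable.tsum_sub S1 S2]
    refine tsum_congr fun j => ?_
    ring
  have hinner : ∀ j, (∑' m, T j m) = c j * E j * (Real.cos (X * c j) - 1) := by
    intro j
    rw [hTdef]
    rw [tsum_mul_right, cos_sub_one (X * c j)]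
    ring
  have hswap : (∑' m, ∑' j, T j m) = ∑' j, ∑' m, T j m := Summable.tsum_comm hT
  have hiter : ∀ m : ℕ, iteratedDeriv (2 * (m + 1) + 1) fFun y =
      ∑' j, (-(c j)) ^ (2 * (m + 1) + 1) * E j := fun m => iteratedDeriv_fFun _ y hy
  have houter : ∀ m : ℕ, (∑' j, T j m) =
      (-1 : ℝ) ^ (m + 1 + 1) * X ^ (2 * (m + 1)) / ((2 * (m + 1)).factorial : ℝ) *
        iteratedDeriv (2 * (m + 1) + 1) fFun y := by
    intro m
    rw [hiter m, ← tsum_mul_left]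
    refine tsum_congr fun j => ?_
    simp only [hTdef]
    have hodd : Odd (2 * (m + 1) + 1) := ⟨m + 1, by ring⟩
    rw [hodd.neg_pow]
    rw [mul_pow X (c j) (2 * (m + 1)), pow_succ (c j) (2 * (m + 1)), pow_succ (-1 : ℝ) (m + 1)]
    ring
  constructor
  · rw [hL, tsum_congr fun j => (hinner j).symm, ← hswap]
    exact tsum_congr houter
  · have hTabs' : Summable fun p : ℕ × ℕ => |T p.2 p.1| :=
      (Equiv.prodComm ℕ ℕ).summable_iff.2 hTabs
    have hkey := (summable_prod_of_nonneg
      (f := fun p : ℕ × ℕ => |T p.2 p.1|) (fun p => abs_nonneg _)).1 hTabs'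
    refine Summable.of_nonneg_of_le (fun m => abs_nonneg _) (fun m => ?_) hkey.2
    rw [← houter m]
    have hs : Summable fun j => ‖T j m‖ := by
      simpa [Real.norm_eq_abs] using hkey.1 m
    have hb := norm_tsum_le_tsum_norm hs
    simpa [Real.norm_eq_abs] using hb
end

section
/- For every complex number z with Re z > 1, the derivative of the Riemann zeta function satisfies ζ′(1 − z) = sin(πz/2) · 2^{−z} · π^{1−z} · Γ(z) · ζ(z) − 2 cos(πz/2) · ∫₀^∞ (w^{z−1} ln w)/(e^{2πw} − 1) dw. -/
open Real Complex

section Aux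

open MeasureTheory Set Filter Asymptotics

/-- The kernel `1 / (e^{2πt} - 1)`. -/
noncomputable def zetaKer : ℝ → ℂ := fun t ↦ 1 / ((Real.exp (2 * π * t) : ℂ) - 1)

lemma one_lt_exp_aux {t : ℝ} (ht : 0 < t) : (1 : ℝ) < Real.exp (2 * π * t) := by
  have h := Real.add_one_le_exp (2 * π * t)
  nlinarith [Real.pi_pos]

lemma zetaKer_norm {t : ℝ} (ht : 0 < t) :
    ‖zetaKer t‖ = (Real.exp (2 * π * t) - 1)⁻¹ := by
  have h1 := one_lt_exp_aux ht
  rw [zetaKer, norm_div, norm_one, one_div]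
  rw [show ((Real.exp (2 * π * t) : ℂ) - 1) = ((Real.exp (2 * π * t) - 1 : ℝ) : ℂ) by push_cast; ring]
  rw [Complex.norm_real, Real.norm_eq_abs, abs_of_pos (by linarith)]

lemma zetaKer_hasSum {t : ℝ} (ht : 0 < t) :
    HasSum (fun n : ℕ ↦ (1 : ℂ) * Real.exp (-(2 * π * (n + 1)) * t)) (zetaKer t) := by
  set r : ℝ := Real.exp (-(2 * π * t)) with hr
  have hr0 : 0 ≤ r := (Real.exp_pos _).le
  have hr1 : r < 1 := by
    rw [hr, Real.exp_lt_one_iff]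
    have : (0:ℝ) < 2 * π * t := by positivity
    linarith
  have hgeo : HasSum (fun n : ℕ ↦ r * r ^ n) (r * (1 - r)⁻¹) :=
    (hasSum_geometric_of_lt_one hr0 hr1).mul_left r
  have hterm : ∀ n : ℕ, r * r ^ n = Real.exp (-(2 * π * (n + 1)) * t) := by
    intro n
    rw [hr, ← Real.exp_nat_mul, ← Real.exp_add]
    congr 1
    push_cast
    ring
  have hval : r * (1 - r)⁻¹ = (Real.exp (2 * π * t) - 1)⁻¹ := by
    have hne : Real.exp (2 * π * t) ≠ 0 := (Real.exp_pos _).ne'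
    have h1 := one_lt_exp_aux ht
    have hE1 : Real.exp (2 * π * t) - 1 ≠ 0 := ne_of_gt (by linarith)
    have h1r : 1 - r ≠ 0 := ne_of_gt (by linarith)
    rw [hr, Real.exp_neg] at *
    field_simp
  have : HasSum (fun n : ℕ ↦ Real.exp (-(2 * π * (n + 1)) * t))
      ((Real.exp (2 * π * t) - 1)⁻¹) := by
    rw [← hval]
    exact hgeo.congr_fun fun n ↦ (hterm n).symm
  have hC := hasSum_ofReal.mpr this
  have hzk : zetaKer t = (((Real.exp (2 * π * t) - 1)⁻¹ : ℝ) : ℂ) := by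
    rw [zetaKer, one_div]
    push_cast
    ring
  rw [hzk]
  exact hC.congr_fun fun n ↦ one_mul _

lemma zetaKer_mellin {s : ℂ} (hs : 1 < s.re) :
    mellin zetaKer s = ((2 * π : ℝ) : ℂ) ^ (-s) * Complex.Gamma s * riemannZeta s := by
  have hs0 : 0 < s.re := by linarith
  have hsum : Summable fun n : ℕ ↦ ‖(1 : ℂ)‖ / (2 * π * (n + 1)) ^ s.re := by
    have h1 : Summable fun n : ℕ ↦ 1 / ((n : ℝ) + 1) ^ s.re := by
      have := (summable_nat_add_iff 1).mpr (Real.summable_one_div_nat_rpow.mpr hs)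
      refine this.congr fun n ↦ ?_
      push_cast
      ring_nf
    refine (h1.mul_left ((2 * π) ^ s.re)⁻¹).congr fun n ↦ ?_
    have h2 : (0:ℝ) ≤ 2 * π := by positivity
    have h3 : (0:ℝ) ≤ (n : ℝ) + 1 := by positivity
    rw [Real.mul_rpow h2 h3, norm_one]
    field_simp
  have key := hasSum_mellin (F := zetaKer) (a := fun _ : ℕ ↦ (1 : ℂ))
    (p := fun n : ℕ ↦ 2 * π * (n + 1)) (s := s)
    (fun n ↦ Or.inr (by positivity)) hs0 (fun t ht ↦ zetaKer_hasSum ht) hsum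
  have hterm : ∀ n : ℕ, Complex.Gamma s * (1 : ℂ) / ((2 * π * ((n : ℝ) + 1) : ℝ) : ℂ) ^ s
      = ((2 * π : ℝ) : ℂ) ^ (-s) * Complex.Gamma s * (1 / ((n : ℂ) + 1) ^ s) := by
    intro n
    have h2 : (0:ℝ) ≤ 2 * π := by positivity
    have h3 : (0:ℝ) ≤ (n : ℝ) + 1 := by positivity
    have hb : ((2 * π * ((n : ℝ) + 1) : ℝ) : ℂ)
        = ((2 * π : ℝ) : ℂ) * ((((n : ℝ) + 1 : ℝ)) : ℂ) := by push_cast; ring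
    rw [hb, mul_cpow_ofReal_nonneg h2 h3, Complex.cpow_neg]
    have hc : (((n : ℝ) + 1 : ℝ) : ℂ) = (n : ℂ) + 1 := by push_cast; ring
    rw [hc, mul_one, one_div, div_eq_mul_inv, mul_inv]
    ring
  rw [← key.tsum_eq]
  calc ∑' n : ℕ, Complex.Gamma s * (1 : ℂ) / ((2 * π * ((n : ℝ) + 1) : ℝ) : ℂ) ^ s
      = ∑' n : ℕ, ((2 * π : ℝ) : ℂ) ^ (-s) * Complex.Gamma s * (1 / ((n : ℂ) + 1) ^ s) := by
        exact tsum_congr hterm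
    _ = ((2 * π : ℝ) : ℂ) ^ (-s) * Complex.Gamma s * ∑' n : ℕ, 1 / ((n : ℂ) + 1) ^ s := by
        rw [tsum_mul_left]
    _ = ((2 * π : ℝ) : ℂ) ^ (-s) * Complex.Gamma s * riemannZeta s := by
        rw [← zeta_eq_tsum_one_div_nat_add_one_cpow hs]

lemma zetaKer_continuousOn : ContinuousOn zetaKer (Ioi 0) := by
  apply ContinuousOn.div continuousOn_const
  · exact ((Complex.continuous_ofReal.comp
      (Real.continuous_exp.comp (continuous_const.mul continuous_id'))).sub
      continuous_const).continuousOn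
  · intro t ht
    have h1 := one_lt_exp_aux (mem_Ioi.mp ht)
    intro h
    rw [sub_eq_zero] at h
    have : Real.exp (2 * π * t) = 1 := by exact_mod_cast h
    linarith

lemma zetaKer_isBigO_atTop : zetaKer =O[atTop] fun t ↦ Real.exp (-1 * t) := by
  apply IsBigO.of_bound 2
  filter_upwards [eventually_ge_atTop 1] with t ht
  have ht0 : 0 < t := by linarith
  have hpi : (1:ℝ) ≤ 2 * π * t := by
    nlinarith [Real.pi_gt_three]
  have hexp2 : (2:ℝ) ≤ Real.exp (2 * π * t) := by
    calc (2:ℝ) = 1 + 1 := by norm_num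
    _ ≤ Real.exp 1 := Real.add_one_le_exp 1
    _ ≤ Real.exp (2 * π * t) := Real.exp_le_exp.mpr hpi
  rw [zetaKer_norm ht0, Real.norm_eq_abs, abs_of_pos (Real.exp_pos _)]
  have h1 : Real.exp (2 * π * t) / 2 ≤ Real.exp (2 * π * t) - 1 := by linarith
  have h2 : (0:ℝ) < Real.exp (2 * π * t) / 2 := by positivity
  calc (Real.exp (2 * π * t) - 1)⁻¹ ≤ (Real.exp (2 * π * t) / 2)⁻¹ := by
        apply inv_anti₀ h2 h1
    _ = 2 * Real.exp (-(2 * π * t)) := by rw [Real.exp_neg]; field_simp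
    _ ≤ 2 * Real.exp (-1 * t) := by
        have : -(2 * π * t) ≤ -1 * t := by nlinarith [Real.pi_gt_three]
        have := Real.exp_le_exp.mpr this
        linarith

lemma zetaKer_isBigO_zero : zetaKer =O[nhdsWithin 0 (Ioi 0)] fun t : ℝ ↦ t ^ (-1 : ℝ) := by
  apply IsBigO.of_bound (2 * π)⁻¹
  filter_upwards [self_mem_nhdsWithin] with t ht
  have ht0 : (0:ℝ) < t := mem_Ioi.mp ht
  have hlb : 2 * π * t ≤ Real.exp (2 * π * t) - 1 := by
    have := Real.add_one_le_exp (2 * π * t)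
    linarith
  have hpos : (0:ℝ) < 2 * π * t := by positivity
  rw [zetaKer_norm ht0, Real.norm_eq_abs, Real.rpow_neg_one, abs_of_pos (by positivity)]
  calc (Real.exp (2 * π * t) - 1)⁻¹ ≤ (2 * π * t)⁻¹ := inv_anti₀ hpos hlb
    _ = (2 * π)⁻¹ * t⁻¹ := by rw [mul_inv]

lemma zetaKer_hasDerivAt {z : ℂ} (hz : 1 < z.re) :
    HasDerivAt (mellin zetaKer) (mellin (fun t ↦ Real.log t • zetaKer t) z) z := by
  have h := mellin_hasDerivAt_of_isBigO_rpow (a := z.re + 1) (b := 1)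
    (zetaKer_continuousOn.locallyIntegrableOn measurableSet_Ioi)
    (zetaKer_isBigO_atTop.trans (isLittleO_exp_neg_mul_rpow_atTop one_pos _).isBigO)
    (by linarith) zetaKer_isBigO_zero (by linarith)
  exact h.2

end Aux

/-- For `Re z > 1`,
`ζ′(1 - z) = sin(πz/2) 2^{-z} π^{1-z} Γ(z) ζ(z) - 2 cos(πz/2) ∫₀^∞ w^{z-1} ln w/(e^{2πw}-1) dw`. -/
theorem deriv_zeta_one_sub (z : ℂ) (hz : 1 < z.re) :
    deriv riemannZeta (1 - z) =
      Complex.sin (π * z / 2) * (2 : ℂ) ^ (-z) * (π : ℂ) ^ (1 - z) *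
          Complex.Gamma z * riemannZeta z -
        2 * Complex.cos (π * z / 2) *
          ∫ w in Set.Ioi (0 : ℝ),
            (w : ℂ) ^ (z - 1) * Real.log w / (Real.exp (2 * π * w) - 1) := by
  have hM := zetaKer_hasDerivAt hz
  set I : ℂ := mellin (fun t ↦ Real.log t • zetaKer t) z with hI
  have hlin : HasDerivAt (fun s : ℂ ↦ (π : ℂ) * s / 2) ((π : ℂ) / 2) z := by
    simpa using (((hasDerivAt_id z).const_mul ((π : ℂ))).div_const 2)
  have hcos : HasDerivAt (fun s : ℂ ↦ Complex.cos ((π : ℂ) * s / 2))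
      (-Complex.sin ((π : ℂ) * z / 2) * ((π : ℂ) / 2)) z :=
    (Complex.hasDerivAt_cos _).comp z hlin
  have hR : HasDerivAt (fun s : ℂ ↦ 2 * Complex.cos ((π : ℂ) * s / 2) * mellin zetaKer s)
      (2 * (-Complex.sin ((π : ℂ) * z / 2) * ((π : ℂ) / 2)) * mellin zetaKer z
        + 2 * Complex.cos ((π : ℂ) * z / 2) * I) z :=
    (hcos.const_mul 2).mul hM
  have hopen : IsOpen {s : ℂ | 1 < s.re} := isOpen_lt continuous_const Complex.continuous_re
  have hmem : {s : ℂ | 1 < s.re} ∈ nhds z := hopen.mem_nhds hz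
  have hEq : (fun s : ℂ ↦ riemannZeta (1 - s))
      =ᶠ[nhds z] fun s ↦ 2 * Complex.cos ((π : ℂ) * s / 2) * mellin zetaKer s := by
    filter_upwards [hmem] with s hs
    have hs1 : 1 < s.re := hs
    have hne : ∀ n : ℕ, s ≠ -n := by
      intro n h
      rw [h] at hs1
      have h2 : (1 : ℝ) < -(n : ℝ) := by simpa using hs1
      have := Nat.cast_nonneg (α := ℝ) n
      linarith
    have hne1 : s ≠ 1 := by
      intro h; rw [h] at hs1; simp at hs1
    rw [riemannZeta_one_sub hne hne1, zetaKer_mellin hs1]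
    push_cast
    ring
  have hL : HasDerivAt (fun s : ℂ ↦ riemannZeta (1 - s))
      (2 * (-Complex.sin ((π : ℂ) * z / 2) * ((π : ℂ) / 2)) * mellin zetaKer z
        + 2 * Complex.cos ((π : ℂ) * z / 2) * I) z :=
    hR.congr_of_eventuallyEq hEq
  have h1z : (1 : ℂ) - z ≠ 1 := by
    intro h
    have hz0 : z = 0 := by
      have := sub_eq_self.mp h
      simpa [neg_eq_zero] using this
    rw [hz0] at hz; norm_num at hz
  have hζ : HasDerivAt riemannZeta (deriv riemannZeta (1 - z)) (1 - z) :=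
    (differentiableAt_riemannZeta h1z).hasDerivAt
  have hsub : HasDerivAt (fun s : ℂ ↦ 1 - s) (-1 : ℂ) z := by
    simpa using (hasDerivAt_id z).const_sub (1 : ℂ)
  have hL2 : HasDerivAt (fun s : ℂ ↦ riemannZeta (1 - s))
      (deriv riemannZeta (1 - z) * -1) z := hζ.comp z hsub
  have huniq := hL2.unique hL
  have hD : deriv riemannZeta (1 - z) =
      Complex.sin ((π : ℂ) * z / 2) * (π : ℂ) * mellin zetaKer z -
        2 * Complex.cos ((π : ℂ) * z / 2) * I := by
    linear_combination -huniq
  have hIeq : I = ∫ w in Set.Ioi (0 : ℝ),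
      (w : ℂ) ^ (z - 1) * Real.log w / (Real.exp (2 * π * w) - 1) := by
    rw [hI, mellin]
    refine MeasureTheory.setIntegral_congr_fun measurableSet_Ioi fun t ht ↦ ?_
    simp only [zetaKer, smul_eq_mul, Complex.real_smul]
    ring
  have hpow : (π : ℂ) * ((2 * π : ℝ) : ℂ) ^ (-z) = (2 : ℂ) ^ (-z) * (π : ℂ) ^ (1 - z) := by
    have h2 : ((2 * π : ℝ) : ℂ) = ((2 : ℝ) : ℂ) * ((π : ℝ) : ℂ) := by push_cast; ring
    rw [h2, mul_cpow_ofReal_nonneg (by norm_num) Real.pi_pos.le,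
      show (1 : ℂ) - z = 1 + -z by ring,
      Complex.cpow_add _ _ (by exact_mod_cast Real.pi_ne_zero), Complex.cpow_one]
    norm_num
    ring
  rw [hD, zetaKer_mellin hz, hIeq]
  linear_combination Complex.sin ((π : ℂ) * z / 2) * Complex.Gamma z * riemannZeta z * hpow
end
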